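/- arXiv:1510.07143 — 2 statements merged into one kernel-verified Lean document; each statement's English description precedes it below -/
import Mathlib

section
/- Let A be an associative ring with 1, I, J two-sided ideals of A, and n ≥ 3. For distinct indices i, j, k and elements a ∈ A, α ∈ I, β ∈ J, the conjugate e_{ij}(a) e_{ji}(αβ) e_{ij}(a)⁻¹ can be written as a product of commutators of elements of E(n,I) and E(n,J); in particular e_{ij}(a) e_{ji}(αβ) e_{ij}(−a) = [e_{ik}(aα)e_{jk}(α), e_{ki}(β)e_{kj}(−βa)]. -/
open Matrix
open scoped commutatorElement

variable (n : Type*) [DecidableEq n] [Fintype n] (A : Type*) [Ring A]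

/-- The elementary matrix `e_{ij}(ξ) = 1 + ξ E_{ij}` as a unit of the matrix ring
(its inverse is `e_{ij}(-ξ)`). -/
def elemUnit {n : Type*} [DecidableEq n] [Fintype n] {A : Type*} [Ring A]
    (i j : n) (h : i ≠ j) (ξ : A) : (Matrix n n A)ˣ where
  val := 1 + Matrix.single i j ξ
  inv := 1 + Matrix.single i j (-ξ)
  val_inv := by
    have h0 : Matrix.single i j ξ * Matrix.single i j (-ξ) = 0 :=
      Matrix.single_mul_single_of_ne (c := ξ) i j i h.symm (-ξ)
    have h1 : Matrix.single i j ξ + Matrix.single i j (-ξ) = 0 := by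
      rw [← Matrix.single_add, add_neg_cancel, Matrix.single_zero]
    rw [mul_add, mul_one, add_mul, one_mul, h0, add_zero, add_assoc, h1, add_zero]
  inv_val := by
    have h0 : Matrix.single i j (-ξ) * Matrix.single i j ξ = 0 :=
      Matrix.single_mul_single_of_ne (c := -ξ) i j i h.symm ξ
    have h1 : Matrix.single i j (-ξ) + Matrix.single i j ξ = 0 := by
      rw [← Matrix.single_add, neg_add_cancel, Matrix.single_zero]
    rw [mul_add, mul_one, add_mul, one_mul, h0, add_zero, add_assoc, h1, add_zero]

/-- The subgroup `E(n,S)` of `GL(n,A)` generated by the elementary matrices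
`e_{ij}(ξ)` with `ξ ∈ S`, `i ≠ j`. -/
def elemSubgroup (S : Set A) : Subgroup (Matrix n n A)ˣ :=
  Subgroup.closure {u : (Matrix n n A)ˣ | ∃ i j : n, ∃ ξ ∈ S, i ≠ j ∧
    u.val = 1 + Matrix.single i j ξ}

/-- The relative elementary subgroup `E(n,A,I)`, the normal closure of `E(n,I)`
in `E(n,A)`. -/
def relElemSubgroup (I : TwoSidedIdeal A) : Subgroup (Matrix n n A)ˣ :=
  Subgroup.closure {x : (Matrix n n A)ˣ |
    ∃ c ∈ elemSubgroup n A (Set.univ : Set A), ∃ u ∈ elemSubgroup n A {a : A | a ∈ I},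
      x = c * u * c⁻¹}

/-- The principal congruence subgroup `GL(n,A,K)`: invertible matrices congruent to the
identity modulo `K`.  (This set is already a group, so it coincides with the subgroup it
generates.) -/
def congrSubgroup (K : TwoSidedIdeal A) : Subgroup (Matrix n n A)ˣ :=
  Subgroup.closure {u : (Matrix n n A)ˣ | ∀ i j : n, (u.val - 1) i j ∈ K}

/-!
Conjugation by `e_{ij}(a)` sends `e_{jk}(α)` to `e_{ik}(aα) e_{jk}(α)` and `e_{ki}(β)` to
`e_{ki}(β) e_{kj}(-βa)`; both are instances of the Steinberg relation
`[e_{pq}(x), e_{qr}(y)] = e_{pr}(xy)`. Conjugating the instance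
`[e_{jk}(α), e_{ki}(β)] = e_{ji}(αβ)` by `e_{ij}(a)` therefore gives the identity, and its two
factors visibly lie in `E(n,I)` and `E(n,J)`.
-/

section Steinberg

variable {n : Type*} [DecidableEq n] [Fintype n] {A : Type*} [Ring A]

lemma val_elemUnit (i j : n) (h : i ≠ j) (ξ : A) :
    (elemUnit i j h ξ : Matrix n n A) = 1 + single i j ξ :=
  rfl

lemma elemUnit_inv (i j : n) (h : i ≠ j) (ξ : A) :
    (elemUnit i j h ξ)⁻¹ = elemUnit i j h (-ξ) :=
  Units.ext rfl

lemma elemUnit_mem_elemSubgroup {S : Set A} (i j : n) (h : i ≠ j) {ξ : A} (hξ : ξ ∈ S) :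
    elemUnit i j h ξ ∈ elemSubgroup n A S :=
  Subgroup.subset_closure ⟨i, j, ξ, hξ, h, rfl⟩

lemma commutatorElement_elemUnit_elemUnit {i j k : n}
    (hij : i ≠ j) (hjk : j ≠ k) (hik : i ≠ k) (a b : A) :
    ⁅elemUnit i j hij a, elemUnit j k hjk b⁆ = elemUnit i k hik (a * b) := by
  refine Units.ext ?_
  simp only [commutatorElement_def, elemUnit_inv, Units.val_mul, val_elemUnit, ← single_neg]
  simp only [mul_add, add_mul, mul_neg, neg_mul, one_mul, mul_one, single_mul_single_same,
    single_mul_single_of_ne, ne_eq, hij.symm, hjk.symm, hik.symm, not_false_iff, add_zero]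
  abel

lemma conj_elemUnit_of_col_eq_row {i j k : n} (hij : i ≠ j) (hjk : j ≠ k) (hik : i ≠ k)
    (a b : A) : elemUnit i j hij a * elemUnit j k hjk b * (elemUnit i j hij a)⁻¹ =
      elemUnit i k hik (a * b) * elemUnit j k hjk b := by
  rw [← commutatorElement_elemUnit_elemUnit hij hjk hik, commutatorElement_def,
    inv_mul_cancel_right]

lemma conj_elemUnit_of_row_eq_col {i j k : n} (hij : i ≠ j) (hki : k ≠ i) (hkj : k ≠ j)
    (a b : A) : elemUnit i j hij a * elemUnit k i hki b * (elemUnit i j hij a)⁻¹ =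
      elemUnit k i hki b * elemUnit k j hkj (-(b * a)) := by
  rw [← neg_mul, ← commutatorElement_elemUnit_elemUnit hki hij hkj, ← elemUnit_inv,
    commutatorElement_def, inv_inv]
  simp only [mul_assoc, mul_inv_cancel_left]

lemma conj_elemUnit_eq_commutatorElement {i j k : n} (hij : i ≠ j) (hik : i ≠ k) (hjk : j ≠ k)
    (a α β : A) :
    elemUnit i j hij a * elemUnit j i hij.symm (α * β) * (elemUnit i j hij a)⁻¹ =
      ⁅elemUnit i k hik (a * α) * elemUnit j k hjk α,
        elemUnit k i hik.symm β * elemUnit k j hjk.symm (-(β * a))⁆ := by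
  rw [← commutatorElement_elemUnit_elemUnit hjk hik.symm hij.symm, conjugate_commutatorElement,
    conj_elemUnit_of_col_eq_row hij hjk hik, conj_elemUnit_of_row_eq_col hij hik.symm hjk.symm]

end Steinberg

theorem conj_elem_eq_commutator_general {N : ℕ} {A : Type*} [Ring A]
    (I J : TwoSidedIdeal A) (i j k : Fin N)
    (hij : i ≠ j) (hik : i ≠ k) (hjk : j ≠ k)
    (a α β : A) (hα : α ∈ I) (hβ : β ∈ J) :
    elemUnit i j hij a * elemUnit j i hij.symm (α * β) * (elemUnit i j hij a)⁻¹ ∈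
      ⁅elemSubgroup (Fin N) A {z : A | z ∈ I}, elemSubgroup (Fin N) A {z : A | z ∈ J}⁆ ∧
    elemUnit i j hij a * elemUnit j i hij.symm (α * β) * (elemUnit i j hij a)⁻¹ =
      ⁅elemUnit i k hik (a * α) * elemUnit j k hjk α,
        elemUnit k i hik.symm β * elemUnit k j hjk.symm (-(β * a))⁆ := by
  rw [conj_elemUnit_eq_commutatorElement hij hik hjk]
  refine ⟨Subgroup.commutator_mem_commutator ?_ ?_, rfl⟩
  · exact mul_mem (elemUnit_mem_elemSubgroup i k hik (I.mul_mem_left a α hα))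
      (elemUnit_mem_elemSubgroup j k hjk hα)
  · exact mul_mem (elemUnit_mem_elemSubgroup k i hik.symm hβ)
      (elemUnit_mem_elemSubgroup k j hjk.symm (neg_mem (J.mul_mem_right β a hβ)))

/-- For distinct `i, j, k`, `a ∈ A`, `α ∈ I`, `β ∈ J`, the conjugate
`e_{ij}(a) e_{ji}(αβ) e_{ij}(a)⁻¹` lies in `[E(n,I), E(n,J)]`; in particular it equals
the commutator `[e_{ik}(aα)e_{jk}(α), e_{ki}(β)e_{kj}(-βa)]`. -/
theorem conj_elem_eq_commutator {N : ℕ} (hN : 3 ≤ N) {A : Type*} [Ring A]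
    (I J : TwoSidedIdeal A) (i j k : Fin N)
    (hij : i ≠ j) (hik : i ≠ k) (hjk : j ≠ k)
    (a α β : A) (hα : α ∈ I) (hβ : β ∈ J) :
    elemUnit i j hij a * elemUnit j i hij.symm (α * β) * (elemUnit i j hij a)⁻¹ ∈
      ⁅elemSubgroup (Fin N) A {z : A | z ∈ I}, elemSubgroup (Fin N) A {z : A | z ∈ J}⁆ ∧
    elemUnit i j hij a * elemUnit j i hij.symm (α * β) * (elemUnit i j hij a)⁻¹ =
      ⁅elemUnit i k hik (a * α) * elemUnit j k hjk α,
        elemUnit k i hik.symm β * elemUnit k j hjk.symm (-(β * a))⁆ :=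
  conj_elem_eq_commutator_general I J i j k hij hik hjk a α β hα hβ
end

section
/- Let A be an associative ring with 1 and I a two-sided ideal. For any x ∈ GL(n,A,I) and y ∈ GL(n,A,I), the 2n×2n block-diagonal matrix diag(xyx⁻¹y⁻¹, 1) belongs to the relative elementary subgroup E(2n,A,I). -/
open Matrix

variable (n : Type*) [DecidableEq n] [Fintype n] (A : Type*) [Ring A]

/-- The block diagonal embedding `GL(n,A) → GL(2n,A)`, `g ↦ diag(g, 1)`. -/
def blockDiagUnit {N : ℕ} {A : Type*} [Ring A] (u : (Matrix (Fin N) (Fin N) A)ˣ) :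
    (Matrix (Fin N ⊕ Fin N) (Fin N ⊕ Fin N) A)ˣ where
  val := Matrix.fromBlocks u.val 0 0 1
  inv := Matrix.fromBlocks (u⁻¹).val 0 0 1
  val_inv := by
    rw [Matrix.fromBlocks_multiply]
    simp only [mul_zero, zero_mul, add_zero, zero_add, mul_one, one_mul,
      Units.mul_inv, Units.inv_mul]
    rw [Matrix.fromBlocks_one]
  inv_val := by
    rw [Matrix.fromBlocks_multiply]
    simp only [mul_zero, zero_mul, add_zero, zero_add, mul_one, one_mul,
      Units.mul_inv, Units.inv_mul]
    rw [Matrix.fromBlocks_one]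

/-!
If `α ≡ 1 (mod I)`, write `α = 1 + ε` and `α⁻¹ = 1 - δ`, where `ε` and `δ` have entries in `I`.
With `u(β) = [[1, β], [0, 1]]` and `l(γ) = [[1, 0], [γ, 1]]`, the Whitehead identity
`u(α) l(-α⁻¹) u(α) = diag(α, α⁻¹) · w`, `w = u(1) l(-1) u(1)`, writes `diag(α, α⁻¹)` as a product
of `E(2n,A)`-conjugates of `u(ε)` and `l(δ)`, and these lie in `E(2n,I)` as products of elementary
matrices with entries in `I`. The theorem follows from
`diag(xyx⁻¹y⁻¹, 1) = diag(x, x⁻¹) · diag(y, y⁻¹) · diag((yx)⁻¹, yx)`, since `yx ≡ 1 (mod I)`.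
-/

namespace TwoSidedIdeal

variable {R : Type*} [Ring R] (J : TwoSidedIdeal R) {u v : Rˣ}

theorem val_mul_sub_one_mem (hu : (u : R) - 1 ∈ J) (hv : (v : R) - 1 ∈ J) :
    ((u * v : Rˣ) : R) - 1 ∈ J := by
  have h : ((u * v : Rˣ) : R) - 1 = (u - 1) * v + (v - 1) := by
    rw [Units.val_mul]; noncomm_ring
  rw [h]
  exact J.add_mem (J.mul_mem_right _ _ hu) hv

theorem val_inv_sub_one_mem (hu : (u : R) - 1 ∈ J) : ((u⁻¹ : Rˣ) : R) - 1 ∈ J := by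
  have h : ((u⁻¹ : Rˣ) : R) - 1 = -(↑u⁻¹ * (u - 1)) := by
    rw [mul_sub, Units.inv_mul, mul_one, neg_sub]
  rw [h]
  exact J.neg_mem (J.mul_mem_left _ _ hu)

end TwoSidedIdeal

section Elementary

variable {n A} {S : Set A}

theorem exists_mem_elemSubgroup_val_eq_one_add_sum (s : Finset (n × n)) (c : n × n → A)
    (hc : ∀ p ∈ s, c p ∈ S) (hs : ∀ p ∈ s, ∀ q ∈ s, p.2 ≠ q.1) :
    ∃ u ∈ elemSubgroup n A S, u.val = 1 + ∑ p ∈ s, single p.1 p.2 (c p) := by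
  induction s using Finset.induction_on with
  | empty => exact ⟨1, one_mem _, by simp⟩
  | insert p s hp ih =>
    obtain ⟨u, hu, hval⟩ := ih (fun q hq => hc q (by simp [hq]))
      (fun q hq r hr => hs q (by simp [hq]) r (by simp [hr]))
    have hp' : p.1 ≠ p.2 := (hs p (by simp) p (by simp)).symm
    refine ⟨elemUnit p.1 p.2 hp' (c p) * u,
      mul_mem (Subgroup.subset_closure ⟨p.1, p.2, c p, hc p (by simp), hp', rfl⟩) hu, ?_⟩
    have hkill : single p.1 p.2 (c p) * ∑ q ∈ s, single q.1 q.2 (c q) = 0 := by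
      rw [Finset.mul_sum]
      exact Finset.sum_eq_zero fun q hq =>
        single_mul_single_of_ne _ _ _ _ (hs p (by simp) q (by simp [hq])) _
    rw [Units.val_mul, hval, Finset.sum_insert hp]
    change (1 + single p.1 p.2 (c p)) * _ = _
    rw [mul_add, mul_one, add_mul, one_mul, hkill, add_zero, add_assoc]

theorem exists_mem_elemSubgroup_val_eq_one_add (X : Matrix n n A) (R : Set n)
    (hX : ∀ i j, X i j ≠ 0 → i ∈ R ∧ j ∉ R) (hS : ∀ i j, X i j ∈ S) :
    ∃ u ∈ elemSubgroup n A S, u.val = 1 + X := by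
  classical
  let s := Finset.univ.filter fun p : n × n => p.1 ∈ R ∧ p.2 ∉ R
  have hsum : ∑ p ∈ s, single p.1 p.2 (X p.1 p.2) = X := by
    rw [Finset.sum_filter_of_ne fun p _ hp => hX p.1 p.2 fun h => hp (by rw [h, single_zero]),
      ← Finset.univ_product_univ, Finset.sum_product]
    exact (matrix_eq_sum_single X).symm
  rw [← hsum]
  refine exists_mem_elemSubgroup_val_eq_one_add_sum s _ (fun p _ => hS p.1 p.2) ?_
  intro p hp q hq hpq
  simp only [s, Finset.mem_filter] at hp hq
  exact hp.2.2 (hpq ▸ hq.2.1)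

end Elementary

section Blocks

variable {A} {m p : Type*} [Fintype m] [Fintype p] [DecidableEq m] [DecidableEq p]

def upperUnit (β : Matrix m p A) : (Matrix (m ⊕ p) (m ⊕ p) A)ˣ where
  val := fromBlocks 1 β 0 1
  inv := fromBlocks 1 (-β) 0 1
  val_inv := by simp [fromBlocks_multiply]
  inv_val := by simp [fromBlocks_multiply]

def lowerUnit (γ : Matrix p m A) : (Matrix (m ⊕ p) (m ⊕ p) A)ˣ where
  val := fromBlocks 1 0 γ 1
  inv := fromBlocks 1 0 (-γ) 1
  val_inv := by simp [fromBlocks_multiply]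
  inv_val := by simp [fromBlocks_multiply]

def blockDiagUnits (a : (Matrix m m A)ˣ) (d : (Matrix p p A)ˣ) : (Matrix (m ⊕ p) (m ⊕ p) A)ˣ where
  val := fromBlocks a 0 0 d
  inv := fromBlocks ↑a⁻¹ 0 0 ↑d⁻¹
  val_inv := by simp [fromBlocks_multiply]
  inv_val := by simp [fromBlocks_multiply]

theorem upperUnit_mul (β β' : Matrix m p A) : upperUnit β * upperUnit β' = upperUnit (β + β') :=
  Units.ext <| by simp [upperUnit, fromBlocks_multiply, add_comm]

theorem lowerUnit_mul (γ γ' : Matrix p m A) : lowerUnit γ * lowerUnit γ' = lowerUnit (γ + γ') :=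
  Units.ext <| by simp [lowerUnit, fromBlocks_multiply, add_comm]

theorem blockDiagUnits_mul (a a' : (Matrix m m A)ˣ) (d d' : (Matrix p p A)ˣ) :
    blockDiagUnits a d * blockDiagUnits a' d' = blockDiagUnits (a * a') (d * d') :=
  Units.ext <| by simp [blockDiagUnits, fromBlocks_multiply]

theorem blockDiagUnit_eq_blockDiagUnits {N : ℕ} (u : (Matrix (Fin N) (Fin N) A)ˣ) :
    blockDiagUnit u = blockDiagUnits u 1 :=
  Units.ext rfl

variable {S : Set A}

theorem upperUnit_mem_elemSubgroup {β : Matrix m p A} (hβ : ∀ i j, β i j ∈ S) (h0 : 0 ∈ S) :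
    upperUnit β ∈ elemSubgroup (m ⊕ p) A S := by
  obtain ⟨u, hu, hval⟩ := exists_mem_elemSubgroup_val_eq_one_add (S := S) (fromBlocks 0 β 0 0)
    (Set.range Sum.inl) (by rintro (i | i) (j | j) h <;> simp_all)
    (by rintro (i | i) (j | j) <;> simp [h0, hβ])
  convert hu
  ext1
  rw [hval, ← fromBlocks_one, fromBlocks_add]
  simp [upperUnit]

theorem lowerUnit_mem_elemSubgroup {γ : Matrix p m A} (hγ : ∀ i j, γ i j ∈ S) (h0 : 0 ∈ S) :
    lowerUnit γ ∈ elemSubgroup (m ⊕ p) A S := by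
  obtain ⟨u, hu, hval⟩ := exists_mem_elemSubgroup_val_eq_one_add (S := S) (fromBlocks 0 0 γ 0)
    (Set.range Sum.inr) (by rintro (i | i) (j | j) h <;> simp_all)
    (by rintro (i | i) (j | j) <;> simp [h0, hγ])
  convert hu
  ext1
  rw [hval, ← fromBlocks_one, fromBlocks_add]
  simp [lowerUnit]

end Blocks

section Whitehead

variable {A} {m : Type*} [Fintype m] [DecidableEq m]

theorem conj_mem_relElemSubgroup (I : TwoSidedIdeal A) {c u : (Matrix m m A)ˣ}
    (hc : c ∈ elemSubgroup m A Set.univ) (hu : u ∈ elemSubgroup m A {a : A | a ∈ I}) :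
    c * u * c⁻¹ ∈ relElemSubgroup m A I :=
  Subgroup.subset_closure ⟨c, hc, u, hu, rfl⟩

theorem upperUnit_mul_lowerUnit_mul_upperUnit (α : (Matrix m m A)ˣ) :
    upperUnit α.val * lowerUnit (-(α⁻¹).val) * upperUnit α.val =
      blockDiagUnits α α⁻¹ * (upperUnit 1 * lowerUnit (-1) * upperUnit 1) :=
  Units.ext <| by
    simp only [Units.val_mul, upperUnit, lowerUnit, blockDiagUnits, fromBlocks_multiply,
      Matrix.mul_one, Matrix.one_mul, mul_neg, Matrix.neg_mul, Units.mul_inv, Units.inv_mul,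
      Matrix.mul_zero, Matrix.zero_mul, add_zero, zero_add, add_neg_cancel, neg_add_cancel]

theorem blockDiagUnits_inv_mem_relElemSubgroup (I : TwoSidedIdeal A) {α : (Matrix m m A)ˣ}
    (hα : α.val - 1 ∈ I.matrix m) :
    blockDiagUnits α α⁻¹ ∈ relElemSubgroup (m ⊕ m) A I := by
  have hα' : 1 - (α⁻¹).val ∈ I.matrix m := by
    rw [← neg_sub]
    exact (I.matrix m).neg_mem ((I.matrix m).val_inv_sub_one_mem hα)
  have hU : upperUnit α.val = upperUnit 1 * upperUnit (α.val - 1) := by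
    rw [upperUnit_mul, add_sub_cancel]
  have hL : lowerUnit (-(α⁻¹).val) = lowerUnit (-1) * lowerUnit (1 - (α⁻¹).val) := by
    rw [lowerUnit_mul]
    congr 1
    abel
  have hD : blockDiagUnits α α⁻¹ =
      upperUnit 1 * upperUnit (α.val - 1) * (lowerUnit (-1) * lowerUnit (1 - (α⁻¹).val)) *
        (upperUnit 1 * upperUnit (α.val - 1)) *
          (upperUnit 1 * lowerUnit (-1) * upperUnit 1)⁻¹ := by
    rw [← hU, ← hL, eq_mul_inv_iff_mul_eq, upperUnit_mul_lowerUnit_mul_upperUnit]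
  have hu₁ : upperUnit (1 : Matrix m m A) ∈ elemSubgroup (m ⊕ m) A Set.univ :=
    upperUnit_mem_elemSubgroup (fun _ _ => trivial) trivial
  have hl₁ : lowerUnit (-1 : Matrix m m A) ∈ elemSubgroup (m ⊕ m) A Set.univ :=
    lowerUnit_mem_elemSubgroup (fun _ _ => trivial) trivial
  have huα : upperUnit (α.val - 1) ∈ elemSubgroup (m ⊕ m) A {a : A | a ∈ I} :=
    upperUnit_mem_elemSubgroup hα I.zero_mem
  have hlα : lowerUnit (1 - (α⁻¹).val) ∈ elemSubgroup (m ⊕ m) A {a : A | a ∈ I} :=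
    lowerUnit_mem_elemSubgroup hα' I.zero_mem
  -- regroup `hD` as a product of three `E(2n,A)`-conjugates of elements of `E(2n,I)`
  rw [hD, show ∀ u₁ u l₁ l : (Matrix (m ⊕ m) (m ⊕ m) A)ˣ,
      u₁ * u * (l₁ * l) * (u₁ * u) * (u₁ * l₁ * u₁)⁻¹ =
        u₁ * u * u₁⁻¹ * (u₁ * l₁ * l * (u₁ * l₁)⁻¹) * (u₁ * l₁ * u₁ * u * (u₁ * l₁ * u₁)⁻¹)
      from fun _ _ _ _ => by group]
  exact mul_mem (mul_mem (conj_mem_relElemSubgroup I hu₁ huα)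
    (conj_mem_relElemSubgroup I (mul_mem hu₁ hl₁) hlα))
    (conj_mem_relElemSubgroup I (mul_mem (mul_mem hu₁ hl₁) hu₁) huα)

end Whitehead

/-- For `x, y ∈ GL(n,A,I)`, the `2n × 2n` matrix `diag(xyx⁻¹y⁻¹, 1)` belongs to the
relative elementary subgroup `E(2n,A,I)`. -/
theorem blockDiag_commutator_mem_relElem {N : ℕ} {A : Type*} [Ring A]
    (I : TwoSidedIdeal A) (x y : (Matrix (Fin N) (Fin N) A)ˣ)
    (hx : ∀ i j, (x.val - 1) i j ∈ I) (hy : ∀ i j, (y.val - 1) i j ∈ I) :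
    blockDiagUnit (x * y * x⁻¹ * y⁻¹) ∈ relElemSubgroup (Fin N ⊕ Fin N) A I := by
  have hyx : ((y * x)⁻¹).val - 1 ∈ I.matrix (Fin N) :=
    (I.matrix (Fin N)).val_inv_sub_one_mem ((I.matrix (Fin N)).val_mul_sub_one_mem hy hx)
  have hprod : blockDiagUnit (x * y * x⁻¹ * y⁻¹) =
      blockDiagUnits x x⁻¹ * blockDiagUnits y y⁻¹ * blockDiagUnits (y * x)⁻¹ (y * x)⁻¹⁻¹ := by
    rw [blockDiagUnit_eq_blockDiagUnits, blockDiagUnits_mul, blockDiagUnits_mul]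
    congr 1 <;> group
  rw [hprod]
  exact mul_mem (mul_mem (blockDiagUnits_inv_mem_relElemSubgroup I hx)
    (blockDiagUnits_inv_mem_relElemSubgroup I hy))
    (blockDiagUnits_inv_mem_relElemSubgroup I hyx)
end
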